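/- Let m ≥ 3 and 2 ≤ i ≤ m−1. The ideals J of R with Q^m_i ⊆ J and dim_ℂ(R/J) = m−1 are exactly the following: the ideals I^{m−1}_{i−1}(a) = (y^{i−1} + a·x^{m−i}) for a ∈ ℂ, a ≠ 0, together with Q^{m−1}_i = (x^{m−i}, y^i) and Q^{m−1}_{i−1} = (x^{m−i+1}, y^{i−1}). -/

import Mathlib

noncomputable section

open MvPolynomial

/-- The polynomial ring `ℂ[x,y]`. -/
abbrev Pc : Type := MvPolynomial (Fin 2) ℂ

/-- The ideal `(xy)` of `ℂ[x,y]`. -/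
def nodeIdeal : Ideal Pc := Ideal.span {X 0 * X 1}

/-- The affine coordinate ring `ℂ[x,y]/(xy)` of the node. -/
abbrev Anode : Type := Pc ⧸ nodeIdeal

/-- The class of `x` in `ℂ[x,y]/(xy)`. -/
def xA : Anode := Ideal.Quotient.mk nodeIdeal (X 0)

/-- The class of `y` in `ℂ[x,y]/(xy)`. -/
def yA : Anode := Ideal.Quotient.mk nodeIdeal (X 1)

/-- The maximal ideal `(x,y)` of `ℂ[x,y]/(xy)`. -/
def mA : Ideal Anode := Ideal.span {xA, yA}

/-- Evaluation of polynomials at the origin. -/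
def evalO : Pc →+* ℂ := (aeval (fun _ => (0:ℂ)) : Pc →ₐ[ℂ] ℂ).toRingHom

lemma node_le_ker : nodeIdeal ≤ RingHom.ker evalO := by
  rw [nodeIdeal, Ideal.span_le, Set.singleton_subset_iff]
  simp [evalO, RingHom.mem_ker]

/-- Evaluation at the origin, descended to `ℂ[x,y]/(xy)`. -/
def εA : Anode →+* ℂ := Ideal.Quotient.lift nodeIdeal evalO node_le_ker

lemma sub_const_mem (p : Pc) :
    p - C (constantCoeff p) ∈ (Ideal.span {(X 0 : Pc), X 1}) := by
  induction p using MvPolynomial.induction_on with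
  | C a => simp
  | add p q hp hq =>
      have : p + q - C (constantCoeff (p + q)) =
          (p - C (constantCoeff p)) + (q - C (constantCoeff q)) := by
        rw [map_add, map_add]; ring
      rw [this]; exact Ideal.add_mem _ hp hq
  | mul_X p i hp =>
      have h0 : constantCoeff (p * X i) = 0 := by
        rw [map_mul, constantCoeff_X, mul_zero]
      rw [h0, map_zero, sub_zero]
      refine Ideal.mul_mem_left _ p (Ideal.subset_span ?_)
      fin_cases i <;> simp

lemma mA_eq_ker : mA = RingHom.ker εA := by
  apply le_antisymm
  · rw [mA, Ideal.span_le]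
    rintro z hz
    simp only [Set.mem_insert_iff, Set.mem_singleton_iff] at hz
    rcases hz with rfl | rfl <;>
      simp [RingHom.mem_ker, xA, yA, εA, evalO, Ideal.Quotient.lift_mk]
  · intro z hz
    obtain ⟨p, rfl⟩ := Ideal.Quotient.mk_surjective z
    have hev : constantCoeff p = 0 := by
      have : εA (Ideal.Quotient.mk nodeIdeal p) = evalO p := rfl
      rw [RingHom.mem_ker, this] at hz
      simpa [evalO] using hz
    have hp : p ∈ (Ideal.span {(X 0 : Pc), X 1}) := by
      have := sub_const_mem p
      rwa [hev, map_zero, sub_zero] at this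
    have : Ideal.Quotient.mk nodeIdeal p ∈
        Ideal.map (Ideal.Quotient.mk nodeIdeal) (Ideal.span {(X 0 : Pc), X 1}) :=
      Ideal.mem_map_of_mem _ hp
    rwa [Ideal.map_span, Set.image_insert_eq, Set.image_singleton] at this

instance : mA.IsPrime := mA_eq_ker ▸ RingHom.ker_isPrime εA

/-- `R`, the localization of `ℂ[x,y]/(xy)` at the maximal ideal `(x,y)`. -/
abbrev Rnode : Type := Localization.AtPrime mA

/-- The element `x` of `R`. -/
def x : Rnode := algebraMap Anode Rnode xA

/-- The element `y` of `R`. -/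
def y : Rnode := algebraMap Anode Rnode yA

instance : Algebra ℂ Rnode :=
  ((algebraMap Anode Rnode).comp (algebraMap ℂ Anode)).toAlgebra

instance : CommRing Rnode := inferInstance

instance (I : Ideal Rnode) : Algebra ℂ (Rnode ⧸ I) := Ideal.Quotient.algebra ℂ

/-!
An ideal `J ⊇ (x^(k+1), y^(l+1))` of `R` is recovered from its preimage `K` in `ℂ[x,y]`, and
`ℂ[x,y] → R/J` is onto because an element outside `(x,y)` is a unit modulo any `(x,y)`-primary
ideal; hence `R/J ≅ ℂ[x,y]/K`. Modulo `(xy, x^(k+1), y^(l+1))` the monomials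
`1, x, …, x^k, y, …, y^l` form a basis, so an ideal `K` of colength one less is that ideal plus a
line `ℂ v`. Since `x` and `y` act nilpotently on that line they kill `v`, which puts `v` in the
socle `ℂ x^k + ℂ y^l`. Writing `v = α x^k + β y^l` and rescaling by a unit gives the three
families of the statement.
-/

open Module

theorem finrank_quotient_eq_of_surjective {k A M : Type*} [Field k] [CommRing A] [Algebra k A]
    [AddCommGroup M] [Module k M] {f : A →ₗ[k] M} (hf : Function.Surjective f) {I : Ideal A}
    (hI : ∀ z, f z = 0 ↔ z ∈ I) :
    finrank k (A ⧸ I) = finrank k M := by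
  have hker : LinearMap.ker f = I.restrictScalars k := by ext z; exact hI z
  exact ((Submodule.Quotient.restrictScalarsEquiv k I).symm ≪≫ₗ
    Submodule.quotEquivOfEq _ _ hker.symm ≪≫ₗ f.quotKerEquivOfSurjective hf).finrank_eq

theorem finrank_quotient_add_one_eq_iff {k A : Type*} [Field k] [CommRing A] [Algebra k A]
    {I K : Ideal A} (hle : I ≤ K) [FiniteDimensional k (A ⧸ I)] :
    finrank k (A ⧸ K) + 1 = finrank k (A ⧸ I) ↔
      ∃ v ∈ K, v ∉ I ∧ ∀ z ∈ K, ∃ c : k, z - c • v ∈ I := by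
  set f := (Ideal.Quotient.factorₐ k hle).toLinearMap
  have hmem : ∀ z, Ideal.Quotient.mk I z ∈ LinearMap.ker f ↔ z ∈ K := fun z => by
    simp [f, Ideal.Quotient.eq_zero_iff_mem]
  have hsmul : ∀ (c : k) z, Ideal.Quotient.mk I (c • z) = c • Ideal.Quotient.mk I z :=
    map_smul (Ideal.Quotient.mkₐ k I)
  have hrank : finrank k (A ⧸ K) + finrank k (LinearMap.ker f) = finrank k (A ⧸ I) := by
    rw [← f.finrank_range_add_finrank_ker, LinearMap.range_eq_top.mpr
      (Ideal.Quotient.factor_surjective hle), finrank_top]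
  rw [← hrank, Nat.add_left_cancel_iff, eq_comm, finrank_eq_one_iff']
  constructor
  · rintro ⟨⟨u, hu⟩, hu0, hspan⟩
    obtain ⟨v, rfl⟩ := Ideal.Quotient.mk_surjective u
    refine ⟨v, (hmem v).mp hu, fun hv => hu0 ?_, fun z hz => ?_⟩
    · simpa [Ideal.Quotient.eq_zero_iff_mem] using hv
    · obtain ⟨c, hc⟩ := hspan ⟨_, (hmem z).mpr hz⟩
      refine ⟨c, Ideal.Quotient.eq_zero_iff_mem.mp ?_⟩
      rw [map_sub, hsmul, sub_eq_zero]
      exact (congrArg Subtype.val hc).symm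
  · rintro ⟨v, hvK, hvI, hv⟩
    refine ⟨⟨_, (hmem v).mpr hvK⟩, fun h => hvI ?_, fun ⟨u, hu⟩ => ?_⟩
    · simpa [Ideal.Quotient.eq_zero_iff_mem] using congrArg Subtype.val h
    · obtain ⟨z, rfl⟩ := Ideal.Quotient.mk_surjective u
      obtain ⟨c, hc⟩ := hv z ((hmem z).mp hu)
      refine ⟨c, Subtype.ext ?_⟩
      change c • Ideal.Quotient.mk I v = Ideal.Quotient.mk I z
      rwa [← hsmul, eq_comm, ← sub_eq_zero, ← map_sub, Ideal.Quotient.eq_zero_iff_mem]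

theorem mul_mem_of_pow_mem_of_sub_smul_mem {k A : Type*} [Field k] [CommRing A] [Algebra k A]
    {I : Ideal A} {g v : A} {c : k} {n : ℕ} (hv : v ∉ I) (hg : g ^ n ∈ I)
    (hc : g * v - c • v ∈ I) : g * v ∈ I := by
  have hpow : ∀ t, g ^ t * v - c ^ t • v ∈ I := by
    intro t
    induction t with
    | zero => simp
    | succ t ih =>
      have h : g ^ (t + 1) * v - c ^ (t + 1) • v =
          g * (g ^ t * v - c ^ t • v) + c ^ t • (g * v - c • v) := by
        simp only [Algebra.smul_def, map_pow]; ring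
      rw [h]
      exact I.add_mem (I.mul_mem_left _ ih) (Submodule.smul_of_tower_mem _ _ hc)
  have hcn : c ^ n • v ∈ I := by simpa using I.sub_mem (I.mul_mem_right v hg) (hpow n)
  obtain rfl : c = 0 := by
    by_contra h
    exact hv (by simpa [h] using Submodule.smul_of_tower_mem I (c ^ n)⁻¹ hcn)
  simpa using hc

theorem IsLocalization.AtPrime.surjective_quotientMk_comp_algebraMap {A S : Type*} [CommRing A]
    [CommRing S] [Algebra A S] (P : Ideal A) [P.IsMaximal] [IsLocalization.AtPrime S P]
    {J : Ideal S} (hJ : P ≤ (J.comap (algebraMap A S)).radical) :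
    Function.Surjective ((Ideal.Quotient.mk J).comp (algebraMap A S)) := by
  intro z
  obtain ⟨z, rfl⟩ := Ideal.Quotient.mk_surjective z
  obtain ⟨a, s, rfl⟩ := IsLocalization.exists_mk'_eq P.primeCompl z
  have hcop : J.comap (algebraMap A S) ⊔ Ideal.span {(s : A)} = ⊤ := by
    rw [← Ideal.radical_eq_top]
    by_contra hne
    have hle : P ≤ (J.comap (algebraMap A S) ⊔ Ideal.span {(s : A)}).radical :=
      hJ.trans (Ideal.radical_mono le_sup_left)
    exact s.2 ((Ideal.IsMaximal.eq_of_le ‹_› hne hle).ge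
      (Ideal.le_radical (Ideal.mem_sup_right (Ideal.subset_span rfl))))
  obtain ⟨i, hi, t, ht, hit⟩ := Submodule.mem_sup.mp (hcop ▸ Submodule.mem_top : (1 : A) ∈ _)
  obtain ⟨u, rfl⟩ := Ideal.mem_span_singleton'.mp ht
  refine ⟨a * u, Ideal.Quotient.eq.mpr ?_⟩
  have hs := IsLocalization.mk'_spec S a s
  have hiu : algebraMap A S i + algebraMap A S u * algebraMap A S s = 1 := by
    rw [← map_mul, ← map_add, hit, map_one]
  have h : algebraMap A S (a * u) - IsLocalization.mk' S a s =
      -(IsLocalization.mk' S a s * algebraMap A S i) := by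
    rw [map_mul]
    linear_combination (-(algebraMap A S u)) * hs + IsLocalization.mk' S a s * hiu
  rw [h]
  exact J.neg_mem (J.mul_mem_left _ hi)

lemma span_pair_sup_span_singleton {B : Type*} [CommRing B] {a b c : B}
    (ha : a ∈ Ideal.span {b}) : Ideal.span {c, a} ⊔ Ideal.span {b} = Ideal.span {c, b} := by
  rw [← Ideal.span_union, Set.insert_union, Set.singleton_union, Set.insert_comm, Set.pair_comm]
  exact Submodule.span_insert_eq_span (Ideal.span_mono (by simp) ha)

-- The preimage in `ℂ[x,y]` of the ideal `(x^p, y^j)` of `R`.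
def polyQ (p j : ℕ) : Ideal Pc := Ideal.span {X 0 * X 1, X 0 ^ p, X 1 ^ j}

lemma polyQ_eq_span_monomial (p j : ℕ) :
    polyQ p j = Ideal.span ((fun s => monomial s (1 : ℂ)) ''
      {Finsupp.single 0 1 + Finsupp.single 1 1, Finsupp.single 0 p, Finsupp.single 1 j}) := by
  rw [polyQ, X_pow_eq_monomial, X_pow_eq_monomial]
  simp [Set.image_insert_eq, X, monomial_mul]

lemma mem_polyQ_iff {p j : ℕ} (hp : 1 ≤ p) (hj : 1 ≤ j) {z : Pc} :
    z ∈ polyQ p j ↔ (∀ i < p, coeff (Finsupp.single 0 i) z = 0) ∧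
      ∀ i, 1 ≤ i → i < j → coeff (Finsupp.single 1 i) z = 0 := by
  rw [polyQ_eq_span_monomial, mem_ideal_span_monomial_image]
  simp only [Set.mem_insert_iff, Set.mem_singleton_iff, exists_eq_or_imp, exists_eq_left,
    Finsupp.le_def, Fin.forall_fin_two, MvPolynomial.mem_support_iff, Finsupp.coe_add, Pi.add_apply,
    Finsupp.single_eq_same, Finsupp.single_eq_of_ne, ne_eq, zero_ne_one, one_ne_zero,
    not_false_eq_true, add_zero, zero_add]
  constructor
  · refine fun h => ⟨fun i hi => ?_, fun i hi hij => ?_⟩ <;> by_contra hne <;>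
      have := h _ hne <;>
      simp only [Finsupp.single_eq_same, Finsupp.single_eq_of_ne, ne_eq, zero_ne_one, one_ne_zero,
        not_false_eq_true] at this <;> omega
  · rintro ⟨hx, hy⟩ d hd
    have hd0 : d 1 = 0 → p ≤ d 0 := fun h => by
      by_contra! hlt
      refine hd ?_
      convert hx _ hlt
      ext i; fin_cases i <;> simp [h]
    have hd1 : d 0 = 0 → 1 ≤ d 1 → j ≤ d 1 := fun h h1 => by
      by_contra! hlt
      refine hd ?_
      convert hy _ h1 hlt
      ext i; fin_cases i <;> simp [h]
    omega

lemma X_mul_X_mem_polyQ (p j : ℕ) : X 0 * X 1 ∈ polyQ p j := Ideal.subset_span (by simp)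

lemma X_pow_mem_polyQ_left (p j : ℕ) : X 0 ^ p ∈ polyQ p j := Ideal.subset_span (by simp)

lemma X_pow_mem_polyQ_right (p j : ℕ) : X 1 ^ j ∈ polyQ p j := Ideal.subset_span (by simp)

-- Coordinates on `ℂ[x,y] ⧸ polyQ p j` in its monomial basis `x^i` (`i < p`), `y^i` (`1 ≤ i < j`).
def coeffMap (p j : ℕ) : Pc →ₗ[ℂ] (Fin p → ℂ) × (Fin (j - 1) → ℂ) :=
  (LinearMap.pi fun i : Fin p => lcoeff ℂ (Finsupp.single 0 (i : ℕ))).prod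
    (LinearMap.pi fun i : Fin (j - 1) => lcoeff ℂ (Finsupp.single 1 (i + 1 : ℕ)))

lemma coeffMap_eq_zero_iff {p j : ℕ} (hp : 1 ≤ p) (hj : 1 ≤ j) {z : Pc} :
    coeffMap p j z = 0 ↔ z ∈ polyQ p j := by
  rw [mem_polyQ_iff hp hj]
  simp only [coeffMap, LinearMap.prod_apply, Prod.ext_iff,
    funext_iff, Pi.zero_apply, Prod.fst_zero, Prod.snd_zero, Fin.forall_iff]
  refine and_congr_right fun _ => ⟨fun h i hi hij => ?_, fun h i hi => h _ le_add_self (by omega)⟩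
  obtain ⟨i, rfl⟩ : ∃ i', i = i' + 1 := ⟨i - 1, by omega⟩
  exact h i (by omega)

lemma coeffMap_surjective (p j : ℕ) : Function.Surjective (coeffMap p j) := by
  rintro ⟨u, w⟩
  refine ⟨∑ i : Fin p, u i • X 0 ^ (i : ℕ) + ∑ i : Fin (j - 1), w i • X 1 ^ ((i : ℕ) + 1), ?_⟩
  ext i <;> simp [coeffMap, coeff_X_pow, (Finsupp.single_injective (0 : Fin 2)).eq_iff,
    (Finsupp.single_injective (1 : Fin 2)).eq_iff, Finsupp.single_eq_single_iff, Fin.val_inj,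
    -Finsupp.single_add]

lemma finrank_quotient_polyQ {p j : ℕ} (hp : 1 ≤ p) (hj : 1 ≤ j) :
    finrank ℂ (Pc ⧸ polyQ p j) = p + (j - 1) := by
  rw [finrank_quotient_eq_of_surjective (coeffMap_surjective p j)
    (fun _ => coeffMap_eq_zero_iff hp hj)]
  simp

lemma mul_sub_constantCoeff_smul_mem {I : Ideal Pc} {w : Pc} (h0 : X 0 * w ∈ I)
    (h1 : X 1 * w ∈ I) (r : Pc) : r * w - constantCoeff r • w ∈ I := by
  obtain ⟨s, t, hst⟩ := Ideal.mem_span_pair.mp (sub_const_mem r)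
  have h : r * w - constantCoeff r • w = s * (X 0 * w) + t * (X 1 * w) := by
    rw [smul_eq_C_mul]
    linear_combination (-w) * hst
  rw [h]
  exact I.add_mem (I.mul_mem_left s h0) (I.mul_mem_left t h1)

lemma sub_socle_mem_polyQ {k l : ℕ} (hk : 1 ≤ k) (hl : 1 ≤ l) {v : Pc}
    (hx : X 0 * v ∈ polyQ (k + 1) (l + 1)) (hy : X 1 * v ∈ polyQ (k + 1) (l + 1)) :
    v - (coeff (Finsupp.single 0 k) v • X 0 ^ k + coeff (Finsupp.single 1 l) v • X 1 ^ l) ∈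
      polyQ (k + 1) (l + 1) := by
  have hk0 : k ≠ 0 := by omega
  have hl0 : l ≠ 0 := by omega
  rw [mem_polyQ_iff (by omega) (by omega)] at hx hy ⊢
  refine ⟨fun i hi => ?_, fun i hi hil => ?_⟩
  · have hv : i < k → coeff (Finsupp.single 0 i) v = 0 := fun hik => by
      have h := hx.1 (1 + i) (by omega)
      rwa [Finsupp.single_add, coeff_X_mul] at h
    rcases Nat.lt_or_ge i k with hik | hik
    · simp [hv hik, coeff_X_pow, Finsupp.single_eq_single_iff, hik.ne', hk0, hl0]
    · obtain rfl : i = k := by omega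
      simp [coeff_X_pow, Finsupp.single_eq_single_iff, hk0, hl0]
  · have hv : i < l → coeff (Finsupp.single 1 i) v = 0 := fun hil => by
      have h := hy.2 (1 + i) (by omega) (by omega)
      rwa [Finsupp.single_add, coeff_X_mul] at h
    rcases Nat.lt_or_ge i l with hil | hil
    · simp [hv hil, coeff_X_pow, Finsupp.single_eq_single_iff, hil.ne', hk0, hl0]
    · obtain rfl : i = l := by omega
      simp [coeff_X_pow, Finsupp.single_eq_single_iff, hk0, hl0]

lemma X_mul_socle_mem_polyQ {k l : ℕ} (hk : 1 ≤ k) (hl : 1 ≤ l) (α β : ℂ) :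
    X 0 * (α • X 0 ^ k + β • X 1 ^ l) ∈ polyQ (k + 1) (l + 1) ∧
      X 1 * (α • X 0 ^ k + β • X 1 ^ l) ∈ polyQ (k + 1) (l + 1) := by
  obtain ⟨k, rfl⟩ := Nat.exists_eq_add_of_le' hk
  obtain ⟨l, rfl⟩ := Nat.exists_eq_add_of_le' hl
  have h0 : (X 0 : Pc) * (α • X 0 ^ (k + 1) + β • X 1 ^ (l + 1)) =
      C α * X 0 ^ (k + 1 + 1) + C β * X 1 ^ l * (X 0 * X 1) := by
    simp only [smul_eq_C_mul]; ring
  have h1 : (X 1 : Pc) * (α • X 0 ^ (k + 1) + β • X 1 ^ (l + 1)) =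
      C α * X 0 ^ k * (X 0 * X 1) + C β * X 1 ^ (l + 1 + 1) := by
    simp only [smul_eq_C_mul]; ring
  rw [h0, h1]
  exact ⟨Ideal.add_mem _ (Ideal.mul_mem_left _ _ (X_pow_mem_polyQ_left _ _))
      (Ideal.mul_mem_left _ _ (X_mul_X_mem_polyQ _ _)),
    Ideal.add_mem _ (Ideal.mul_mem_left _ _ (X_mul_X_mem_polyQ _ _))
      (Ideal.mul_mem_left _ _ (X_pow_mem_polyQ_right _ _))⟩

theorem finrank_quotient_eq_iff_eq_polyQ_sup {k l : ℕ} (hk : 1 ≤ k) (hl : 1 ≤ l) {K : Ideal Pc}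
    (hK : polyQ (k + 1) (l + 1) ≤ K) :
    finrank ℂ (Pc ⧸ K) = k + l ↔ ∃ α β : ℂ, ¬(α = 0 ∧ β = 0) ∧
      K = polyQ (k + 1) (l + 1) ⊔ Ideal.span {α • X 0 ^ k + β • X 1 ^ l} := by
  set Q := polyQ (k + 1) (l + 1)
  have hQ : finrank ℂ (Pc ⧸ Q) = k + l + 1 := by
    rw [finrank_quotient_polyQ (by omega) (by omega)]; omega
  have : FiniteDimensional ℂ (Pc ⧸ Q) := Module.finite_of_finrank_pos (by omega)
  rw [show finrank ℂ (Pc ⧸ K) = k + l ↔ finrank ℂ (Pc ⧸ K) + 1 = finrank ℂ (Pc ⧸ Q) by omega,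
    finrank_quotient_add_one_eq_iff hK]
  constructor
  · rintro ⟨v, hvK, hvQ, hv⟩
    have hx : X 0 * v ∈ Q := by
      obtain ⟨c, hc⟩ := hv _ (K.mul_mem_left (X 0) hvK)
      exact mul_mem_of_pow_mem_of_sub_smul_mem hvQ (X_pow_mem_polyQ_left _ _) hc
    have hy : X 1 * v ∈ Q := by
      obtain ⟨c, hc⟩ := hv _ (K.mul_mem_left (X 1) hvK)
      exact mul_mem_of_pow_mem_of_sub_smul_mem hvQ (X_pow_mem_polyQ_right _ _) hc
    set α := coeff (Finsupp.single 0 k) v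
    set β := coeff (Finsupp.single 1 l) v
    set w := α • (X 0 : Pc) ^ k + β • X 1 ^ l
    have hvw : v - w ∈ Q := sub_socle_mem_polyQ hk hl hx hy
    refine ⟨α, β, fun ⟨hα, hβ⟩ => hvQ (by simpa [w, hα, hβ] using hvw), le_antisymm ?_ ?_⟩
    · intro z hz
      obtain ⟨c, hc⟩ := hv z hz
      rw [show z = (z - c • v + c • (v - w)) + c • w by module]
      exact Submodule.add_mem_sup (Q.add_mem hc (Submodule.smul_of_tower_mem _ c hvw))
        (Submodule.smul_of_tower_mem _ c (Ideal.subset_span rfl))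
    · refine sup_le hK (Ideal.span_le.mpr (Set.singleton_subset_iff.mpr ?_))
      simpa using K.sub_mem hvK (hK hvw)
  · rintro ⟨α, β, hαβ, rfl⟩
    set w := α • (X 0 : Pc) ^ k + β • X 1 ^ l
    have hwQ : w ∉ Q := by
      rw [mem_polyQ_iff (by omega) (by omega)]
      rintro ⟨h0, h1⟩
      have hk0 : k ≠ 0 := by omega
      have hl0 : l ≠ 0 := by omega
      exact hαβ ⟨by simpa [w, coeff_X_pow, Finsupp.single_eq_single_iff, hk0] using h0 k (by omega),
        by simpa [w, coeff_X_pow, Finsupp.single_eq_single_iff, hl0] using h1 l hl (by omega)⟩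
    refine ⟨w, Ideal.mem_sup_right (Ideal.subset_span rfl), hwQ, fun z hz => ?_⟩
    obtain ⟨a, ha, b, hb, rfl⟩ := Submodule.mem_sup.mp hz
    obtain ⟨r, rfl⟩ := Ideal.mem_span_singleton'.mp hb
    refine ⟨constantCoeff r, ?_⟩
    rw [add_sub_assoc]
    obtain ⟨hx, hy⟩ := X_mul_socle_mem_polyQ hk hl α β
    exact Q.add_mem ha (mul_sub_constantCoeff_smul_mem hx hy r)

instance : mA.IsMaximal :=
  mA_eq_ker ▸ RingHom.ker_isMaximal_of_surjective εA fun c =>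
    ⟨Ideal.Quotient.mk nodeIdeal (C c), by simp [εA, evalO]⟩

def polyToR : Pc →ₐ[ℂ] Rnode where
  toRingHom := (algebraMap Anode Rnode).comp (Ideal.Quotient.mk nodeIdeal)
  commutes' _ := rfl

@[simp]
lemma polyToR_X0 : polyToR (X 0) = x := rfl

@[simp]
lemma polyToR_X1 : polyToR (X 1) = y := rfl

-- Instance search gives `Rnode` the localization's own `ℂ`-action, not the one of the
-- `Algebra ℂ Rnode` instance above; the two agree only propositionally.
lemma smul_eq_algebraMap_mul (c : ℂ) (z : Rnode) : c • z = algebraMap ℂ Rnode c * z := by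
  rw [@Algebra.smul_def ℂ Rnode _ _ OreLocalization.instAlgebra]
  rfl

lemma polyToR_smul (c : ℂ) (q : Pc) : polyToR (c • q) = c • polyToR q := by
  rw [smul_eq_algebraMap_mul, smul_eq_C_mul, map_mul, ← polyToR.commutes c]
  rfl

lemma x_mul_y : x * y = 0 := by
  have h : Ideal.Quotient.mk nodeIdeal (X 0 * X 1) = 0 :=
    Ideal.Quotient.eq_zero_iff_mem.mpr (Ideal.subset_span rfl)
  rw [← polyToR_X0, ← polyToR_X1, ← map_mul]
  exact (congrArg (algebraMap Anode Rnode) h).trans (map_zero _)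

def polyToQuotient (J : Ideal Rnode) : Pc →ₗ[ℂ] Rnode ⧸ J where
  toFun q := Ideal.Quotient.mk J (polyToR q)
  map_add' a b := by simp
  map_smul' c q := by
    rw [polyToR_smul]
    exact Submodule.Quotient.mk_smul J c (polyToR q)

lemma polyToQuotient_surjective {J : Ideal Rnode} {p j : ℕ} (hx : x ^ p ∈ J) (hy : y ^ j ∈ J) :
    Function.Surjective (polyToQuotient J) := by
  have hJ : mA ≤ (J.comap (algebraMap Anode Rnode)).radical :=
    Ideal.span_le.mpr (Set.pair_subset_iff.mpr
      ⟨⟨p, by rwa [Ideal.mem_comap, map_pow]⟩, ⟨j, by rwa [Ideal.mem_comap, map_pow]⟩⟩)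
  exact (IsLocalization.AtPrime.surjective_quotientMk_comp_algebraMap mA hJ).comp
    Ideal.Quotient.mk_surjective

lemma finrank_quotient_comap_polyToR {J : Ideal Rnode} {p j : ℕ} (hx : x ^ p ∈ J)
    (hy : y ^ j ∈ J) : finrank ℂ (Pc ⧸ J.comap polyToR) = finrank ℂ (Rnode ⧸ J) :=
  finrank_quotient_eq_of_surjective (polyToQuotient_surjective hx hy)
    fun _ => Ideal.Quotient.eq_zero_iff_mem

lemma map_comap_polyToR (J : Ideal Rnode) : (J.comap polyToR).map polyToR = J := by
  calc (J.comap polyToR).map polyToR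
      = ((((J.comap (algebraMap Anode Rnode)).comap (Ideal.Quotient.mk nodeIdeal)).map
          (Ideal.Quotient.mk nodeIdeal)).map (algebraMap Anode Rnode)) := by
        rw [Ideal.map_map]; rfl
    _ = J := by
      rw [Ideal.map_comap_of_surjective _ Ideal.Quotient.mk_surjective]
      exact IsLocalization.map_under mA.primeCompl Rnode J

lemma comap_map_polyToR {I : Ideal Pc} {p j : ℕ} (hnode : nodeIdeal ≤ I)
    (hI : I ≤ RingHom.ker evalO) (hx : X 0 ^ p ∈ I) (hy : X 1 ^ j ∈ I) :
    (I.map polyToR).comap polyToR = I := by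
  set IA := I.map (Ideal.Quotient.mk nodeIdeal)
  have hle : IA ≤ mA := by
    rw [mA_eq_ker, Ideal.map_le_iff_le_comap, RingHom.comap_ker]
    exact hI
  have hrad : IA.radical = mA := by
    refine le_antisymm ((Ideal.radical_mono hle).trans_eq (Ideal.IsPrime.radical inferInstance)) ?_
    have hx' := Ideal.mem_map_of_mem (Ideal.Quotient.mk nodeIdeal) hx
    have hy' := Ideal.mem_map_of_mem (Ideal.Quotient.mk nodeIdeal) hy
    rw [map_pow] at hx' hy'
    exact Ideal.span_le.mpr (Set.pair_subset_iff.mpr ⟨⟨p, hx'⟩, ⟨j, hy'⟩⟩)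
  have hprim : IA.IsPrimary := Ideal.isPrimary_of_isMaximal_radical (hrad ▸ inferInstance)
  have hdisj : Disjoint (mA.primeCompl : Set Anode) IA :=
    Set.disjoint_left.mpr fun _ hs ha => hs (hle ha)
  calc (I.map polyToR).comap polyToR
      = ((IA.map (algebraMap Anode Rnode)).comap (algebraMap Anode Rnode)).comap
          (Ideal.Quotient.mk nodeIdeal) := by
        rw [Ideal.map_map]; rfl
    _ = I := by
      rw [show (IA.map (algebraMap Anode Rnode)).comap (algebraMap Anode Rnode) = IA from
          IsLocalization.under_map_of_isPrimary_disjoint mA.primeCompl Rnode hprim hdisj,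
        Ideal.comap_map_of_surjective _ Ideal.Quotient.mk_surjective, ← RingHom.ker_eq_comap_bot,
        Ideal.mk_ker, sup_eq_left.mpr hnode]

lemma map_polyToR_polyQ (p j : ℕ) :
    (polyQ p j).map polyToR = Ideal.span {x ^ p, y ^ j} := by
  rw [polyQ, Ideal.map_span, Set.image_insert_eq, Set.image_pair, map_mul, map_pow, map_pow,
    polyToR_X0, polyToR_X1, x_mul_y, Ideal.span_insert_zero]

theorem span_le_and_finrank_quotient_iff {k l : ℕ} (hk : 1 ≤ k) (hl : 1 ≤ l) (J : Ideal Rnode) :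
    (Ideal.span {x ^ (k + 1), y ^ (l + 1)} ≤ J ∧ finrank ℂ (Rnode ⧸ J) = k + l) ↔
      ∃ α β : ℂ, ¬(α = 0 ∧ β = 0) ∧
        J = Ideal.span {x ^ (k + 1), y ^ (l + 1)} ⊔ Ideal.span {α • x ^ k + β • y ^ l} := by
  have hmap : ∀ α β : ℂ,
      (polyQ (k + 1) (l + 1) ⊔ Ideal.span {α • X 0 ^ k + β • X 1 ^ l}).map polyToR =
        Ideal.span {x ^ (k + 1), y ^ (l + 1)} ⊔ Ideal.span {α • x ^ k + β • y ^ l} := by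
    intro α β
    rw [Ideal.map_sup, map_polyToR_polyQ, Ideal.map_span, Set.image_singleton, map_add,
      polyToR_smul, polyToR_smul, map_pow, map_pow, polyToR_X0, polyToR_X1]
  constructor
  · rintro ⟨hQ, hrank⟩
    have hK : polyQ (k + 1) (l + 1) ≤ J.comap polyToR := by
      rw [← Ideal.map_le_iff_le_comap, map_polyToR_polyQ]
      exact hQ
    rw [← finrank_quotient_comap_polyToR (p := k + 1) (j := l + 1)
      (hQ (Ideal.subset_span (by simp))) (hQ (Ideal.subset_span (by simp))),
      finrank_quotient_eq_iff_eq_polyQ_sup hk hl hK] at hrank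
    obtain ⟨α, β, hαβ, hJ⟩ := hrank
    exact ⟨α, β, hαβ, by rw [← hmap, ← hJ, map_comap_polyToR]⟩
  · rintro ⟨α, β, hαβ, rfl⟩
    set I := polyQ (k + 1) (l + 1) ⊔ Ideal.span {α • X 0 ^ k + β • X 1 ^ l}
    have hQI : polyQ (k + 1) (l + 1) ≤ I := le_sup_left
    have hI : I ≤ RingHom.ker evalO := by
      have hk0 : k ≠ 0 := by omega
      have hl0 : l ≠ 0 := by omega
      refine sup_le (Ideal.span_le.mpr ?_) (Ideal.span_le.mpr ?_) <;>
        simp [Set.insert_subset_iff, evalO, hk0, hl0]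
    have hcomap : (I.map polyToR).comap polyToR = I :=
      comap_map_polyToR ((Ideal.span_le.mpr (by simpa using X_mul_X_mem_polyQ _ _)).trans hQI)
        hI (hQI (X_pow_mem_polyQ_left _ _)) (hQI (X_pow_mem_polyQ_right _ _))
    refine ⟨le_sup_left, ?_⟩
    rw [← hmap, ← finrank_quotient_comap_polyToR (p := k + 1) (j := l + 1), hcomap,
      finrank_quotient_eq_iff_eq_polyQ_sup hk hl hQI]
    · exact ⟨α, β, hαβ, rfl⟩
    · simpa using Ideal.mem_map_of_mem polyToR (hQI (X_pow_mem_polyQ_left _ _))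
    · simpa using Ideal.mem_map_of_mem polyToR (hQI (X_pow_mem_polyQ_right _ _))

lemma span_singleton_smul {c : ℂ} (hc : c ≠ 0) (v : Rnode) :
    Ideal.span {c • v} = Ideal.span {v} := by
  rw [smul_eq_algebraMap_mul]
  exact Ideal.span_singleton_mul_left_unit ((isUnit_iff_ne_zero.mpr hc).map _) v

lemma span_pow_succ_le_span_add_smul {a : ℂ} (ha : a ≠ 0) {k l : ℕ} (hk : 1 ≤ k) (hl : 1 ≤ l) :
    Ideal.span {x ^ (k + 1), y ^ (l + 1)} ≤ Ideal.span {y ^ l + a • x ^ k} := by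
  obtain ⟨k, rfl⟩ := Nat.exists_eq_add_of_le' hk
  obtain ⟨l, rfl⟩ := Nat.exists_eq_add_of_le' hl
  have hA : algebraMap ℂ Rnode a⁻¹ * algebraMap ℂ Rnode a = 1 := by
    rw [← map_mul, inv_mul_cancel₀ ha, map_one]
  rw [Ideal.span_le, Set.pair_subset_iff, smul_eq_algebraMap_mul]
  constructor <;> refine Ideal.mem_span_singleton'.mpr ?_
  · refine ⟨algebraMap ℂ Rnode a⁻¹ * x, ?_⟩
    linear_combination (algebraMap ℂ Rnode a⁻¹ * y ^ l) * x_mul_y + x ^ (k + 1 + 1) * hA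
  · exact ⟨y, by linear_combination (algebraMap ℂ Rnode a * x ^ k) * x_mul_y⟩

theorem exists_eq_sup_span_iff {k l : ℕ} (hk : 1 ≤ k) (hl : 1 ≤ l) (J : Ideal Rnode) :
    (∃ α β : ℂ, ¬(α = 0 ∧ β = 0) ∧
        J = Ideal.span {x ^ (k + 1), y ^ (l + 1)} ⊔ Ideal.span {α • x ^ k + β • y ^ l}) ↔
      (∃ a : ℂ, a ≠ 0 ∧ J = Ideal.span {y ^ l + a • x ^ k}) ∨
        J = Ideal.span {x ^ k, y ^ (l + 1)} ∨ J = Ideal.span {x ^ (k + 1), y ^ l} := by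
  have hx : x ^ (k + 1) ∈ Ideal.span {x ^ k} :=
    Ideal.mem_span_singleton'.mpr ⟨x, (pow_succ' x k).symm⟩
  have hy : y ^ (l + 1) ∈ Ideal.span {y ^ l} :=
    Ideal.mem_span_singleton'.mpr ⟨y, (pow_succ' y l).symm⟩
  have hsupx : Ideal.span {x ^ (k + 1), y ^ (l + 1)} ⊔ Ideal.span {x ^ k} =
      Ideal.span {x ^ k, y ^ (l + 1)} := by
    rw [Set.pair_comm, span_pair_sup_span_singleton hx, Set.pair_comm]
  have hsupy : Ideal.span {x ^ (k + 1), y ^ (l + 1)} ⊔ Ideal.span {y ^ l} =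
      Ideal.span {x ^ (k + 1), y ^ l} := span_pair_sup_span_singleton hy
  have hgen : ∀ {a : ℂ}, a ≠ 0 → Ideal.span {x ^ (k + 1), y ^ (l + 1)} ⊔
      Ideal.span {y ^ l + a • x ^ k} = Ideal.span {y ^ l + a • x ^ k} :=
    fun ha => sup_eq_right.mpr (span_pow_succ_le_span_add_smul ha hk hl)
  simp only [smul_eq_algebraMap_mul] at hgen ⊢
  constructor
  · rintro ⟨α, β, hαβ, rfl⟩
    by_cases hβ : β = 0
    · have hα : α ≠ 0 := fun hα => hαβ ⟨hα, hβ⟩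
      right; left
      rw [hβ, map_zero, zero_mul, add_zero, ← smul_eq_algebraMap_mul, span_singleton_smul hα, hsupx]
    by_cases hα : α = 0
    · right; right
      rw [hα, map_zero, zero_mul, zero_add, ← smul_eq_algebraMap_mul, span_singleton_smul hβ,
        hsupy]
    left
    refine ⟨α / β, div_ne_zero hα hβ, ?_⟩
    have h : algebraMap ℂ Rnode α * x ^ k + algebraMap ℂ Rnode β * y ^ l =
        β • (y ^ l + algebraMap ℂ Rnode (α / β) * x ^ k) := by
      have hb : algebraMap ℂ Rnode β * algebraMap ℂ Rnode (α / β) = algebraMap ℂ Rnode α := by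
        rw [← map_mul, mul_div_cancel₀ _ hβ]
      rw [smul_eq_algebraMap_mul]
      linear_combination (-x ^ k) * hb
    rw [h, span_singleton_smul hβ, hgen (div_ne_zero hα hβ)]
  · rintro (⟨a, ha, rfl⟩ | rfl | rfl)
    · refine ⟨a, 1, by simp, ?_⟩
      rw [map_one, one_mul, add_comm (algebraMap ℂ Rnode a * x ^ k), hgen ha]
    · exact ⟨1, 0, by simp, by rw [map_one, one_mul, map_zero, zero_mul, add_zero, hsupx]⟩
    · exact ⟨0, 1, by simp, by rw [map_one, one_mul, map_zero, zero_mul, zero_add, hsupy]⟩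

set_option synthInstance.maxHeartbeats 1000000 in
theorem colength_sub_one_ideals_containing_Q_general (m i : ℕ)
    (hi1 : 2 ≤ i) (hi2 : i ≤ m - 1) :
    ∀ J : Ideal Rnode,
      (Ideal.span {x ^ (m - i + 1), y ^ i} ≤ J ∧
        Module.finrank ℂ (Rnode ⧸ J) = m - 1) ↔
      ((∃ a : ℂ, a ≠ 0 ∧ J = Ideal.span {y ^ (i - 1) + a • x ^ (m - i)}) ∨
        J = Ideal.span {x ^ (m - i), y ^ i} ∨
        J = Ideal.span {x ^ (m - i + 1), y ^ (i - 1)}) := by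
  intro J
  obtain ⟨l, rfl⟩ : ∃ l, i = l + 1 := ⟨i - 1, by omega⟩
  rw [show m - 1 = m - (l + 1) + l by omega, Nat.add_sub_cancel]
  exact (span_le_and_finrank_quotient_iff (by omega) (by omega) J).trans
    (exists_eq_sup_span_iff (by omega) (by omega) J)

set_option synthInstance.maxHeartbeats 1000000 in
theorem colength_sub_one_ideals_containing_Q (m i : ℕ)
    (hm : 3 ≤ m) (hi1 : 2 ≤ i) (hi2 : i ≤ m - 1) :
    ∀ J : Ideal Rnode,
      (Ideal.span {x ^ (m - i + 1), y ^ i} ≤ J ∧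
        Module.finrank ℂ (Rnode ⧸ J) = m - 1) ↔
      ((∃ a : ℂ, a ≠ 0 ∧ J = Ideal.span {y ^ (i - 1) + a • x ^ (m - i)}) ∨
        J = Ideal.span {x ^ (m - i), y ^ i} ∨
        J = Ideal.span {x ^ (m - i + 1), y ^ (i - 1)}) :=
  colength_sub_one_ideals_containing_Q_general m i hi1 hi2

end
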